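/- Let b_n be a sequence of complex numbers in S_θ \ {0} with 0 ≤ θ < π/4, suppose M := sup_n |b_{2n}/b_{2n−1}| < ∞, and let C > 0 with C² ≥ M/cos(2θ). Then for every n and every w ∈ S_θ with |w| ≤ C, the even modified convergent f_{2n}(w) = 1/(b_1 + 1/(b_2 + ··· + 1/(b_{2n−1} + 1/(b_{2n} + w))···)) lies in S_θ and satisfies |f_{2n}(w)| ≤ C. -/

import Mathlib

/-!
Since `f_{2n+2}(w) = f_{2n}(w')` with `w' = 1/(b_{2n+1} + 1/(b_{2n+2} + w))`, it suffices to show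
that `w ↦ w'` maps `{w ∈ S_θ : |w| ≤ C}` into itself. `S_θ` is closed under sums and inverses, so
`w' ∈ S_θ`. For the modulus put `a = b_{2n+1}`, `u = 1/(b_{2n+2} + w)`: two points of `S_θ` make an
angle at most `2θ`, so `|a + u|² ≥ |a|² + |u|² + 2|a||u| cos 2θ`, while `|u| ≥ 1/(|b_{2n+2}| + C)`
and `|b_{2n+2}| ≤ C² cos 2θ |a|`; these force `|a + u| ≥ 1/C`.
-/

open Real

/-- The finite continued fraction associated with the denominators `b`:
`F_0 = w`, `F_{k+1} = 1/(b (N - k) + F_k)`, so that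
`F_N = 1/(b 1 + 1/(b 2 + ⋯ + 1/(b N + w)⋯))`. -/
noncomputable def contFrac (N : ℕ) (b : ℕ → ℂ) (w : ℂ) : ℕ → ℂ :=
  Nat.rec w (fun k F => 1 / (b (N - k) + F))

open Complex ComplexConjugate

theorem contFrac_succ (N : ℕ) (b : ℕ → ℂ) (w : ℂ) (k : ℕ) :
    contFrac N b w (k + 1) = 1 / (b (N - k) + contFrac N b w k) := rfl

theorem contFrac_add_two (N : ℕ) (b : ℕ → ℂ) (w : ℂ) (j : ℕ) :
    contFrac (N + 2) b w (j + 2) = contFrac N b (1 / (b (N + 1) + 1 / (b (N + 2) + w))) j := by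
  induction j with
  | zero => rfl
  | succ j ih => rw [contFrac_succ, ih, contFrac_succ, Nat.add_sub_add_right]

def sector (θ : ℝ) : Set ℂ := {z | z = 0 ∨ |z.arg| ≤ θ}

section Sector

variable {θ : ℝ} {z w : ℂ}

theorem mem_sector_iff_norm_mul_cos_le_re (hθ0 : 0 ≤ θ) (hθπ : θ ≤ π) :
    z ∈ sector θ ↔ ‖z‖ * Real.cos θ ≤ z.re := by
  rcases eq_or_ne z 0 with rfl | hz
  · simp [sector]
  have hcos : Real.cos θ ≤ z.re / ‖z‖ ↔ |z.arg| ≤ θ := by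
    rw [← cos_arg hz, ← Real.cos_abs z.arg]
    exact strictAntiOn_cos.le_iff_ge ⟨hθ0, hθπ⟩ ⟨abs_nonneg _, abs_arg_le_pi z⟩
  rw [sector, Set.mem_ofPred_eq, ← hcos, le_div_iff₀ (norm_pos_iff.mpr hz), mul_comm]
  simp [hz]

theorem inv_mem_sector (hθ : θ < π) (hz : z ∈ sector θ) : z⁻¹ ∈ sector θ := by
  rcases hz with rfl | hz
  · simp [sector]
  right
  rwa [arg_inv, if_neg (by linarith [le_abs_self z.arg]), abs_neg]

theorem add_mem_sector (hθ0 : 0 ≤ θ) (hθ : θ ≤ π / 2) (hz : z ∈ sector θ)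
    (hw : w ∈ sector θ) : z + w ∈ sector θ := by
  have hπ := pi_pos
  rw [mem_sector_iff_norm_mul_cos_le_re hθ0 (by linarith)] at hz hw ⊢
  have hcos : 0 ≤ Real.cos θ := Real.cos_nonneg_of_mem_Icc ⟨by linarith, hθ⟩
  calc ‖z + w‖ * Real.cos θ ≤ (‖z‖ + ‖w‖) * Real.cos θ :=
        mul_le_mul_of_nonneg_right (norm_add_le z w) hcos
    _ ≤ (z + w).re := by rw [add_re]; linarith

theorem re_mul_conj_eq_norm_mul_norm_mul_cos_sub (z w : ℂ) :
    (z * conj w).re = ‖z‖ * ‖w‖ * Real.cos (z.arg - w.arg) := by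
  rw [Real.cos_sub, mul_re, conj_re, conj_im, ← norm_mul_cos_arg z, ← norm_mul_cos_arg w,
    ← norm_mul_sin_arg z, ← norm_mul_sin_arg w]
  ring

theorem norm_sq_add_le_norm_add_sq_of_mem_sector (hθ : θ ≤ π / 2) (hz : z ∈ sector θ)
    (hw : w ∈ sector θ) :
    ‖z‖ ^ 2 + ‖w‖ ^ 2 + 2 * ‖z‖ * ‖w‖ * Real.cos (2 * θ) ≤ ‖z + w‖ ^ 2 := by
  rcases hz with rfl | hz
  · simp
  rcases hw with rfl | hw
  · simp
  have hcos : Real.cos (2 * θ) ≤ Real.cos (z.arg - w.arg) := by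
    rw [← Real.cos_abs (z.arg - w.arg)]
    exact Real.cos_le_cos_of_nonneg_of_le_pi (abs_nonneg _) (by linarith)
      ((abs_sub _ _).trans (by linarith))
  have h := normSq_add z w
  rw [normSq_eq_norm_sq, normSq_eq_norm_sq, normSq_eq_norm_sq,
    re_mul_conj_eq_norm_mul_norm_mul_cos_sub] at h
  rw [h, ← mul_assoc, ← mul_assoc]
  gcongr

theorem one_div_add_one_div_mem_sector (hθ0 : 0 ≤ θ) (hθ : θ ≤ π / 2) {a c : ℂ}
    (ha : a ∈ sector θ) (hc : c ∈ sector θ) (hw : w ∈ sector θ) :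
    1 / (a + 1 / (c + w)) ∈ sector θ := by
  have hπ := pi_pos
  simp only [one_div]
  exact inv_mem_sector (by linarith) <|
    add_mem_sector hθ0 hθ ha (inv_mem_sector (by linarith) (add_mem_sector hθ0 hθ hc hw))

end Sector

theorem one_le_sq_mul_sq_add_sq_add_two_mul_mul {C k x t y : ℝ} (hC : 0 ≤ C) (hk : 0 ≤ k)
    (hx : 0 ≤ x) (ht : 0 ≤ t) (hty : 1 ≤ t * (y + C)) (hy : y ≤ C ^ 2 * k * x) :
    1 ≤ C ^ 2 * (x ^ 2 + t ^ 2 + 2 * x * t * k) := by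
  -- `t ≥ 1 / (C d)` reduces the claim to `d² ≤ s²d² + 1 + 2skd`.
  set s := C * x
  set d := k * s + 1
  have hd : 1 ≤ C * t * d := by nlinarith
  have key : d ^ 2 ≤ s ^ 2 * d ^ 2 + 1 + 2 * s * k * d := by
    nlinarith [sq_nonneg (s * d), sq_nonneg (s * k)]
  have hsk : 0 ≤ 2 * s * k * d := by positivity
  have : d ^ 2 * 1 ≤ d ^ 2 * (C ^ 2 * (x ^ 2 + t ^ 2 + 2 * x * t * k)) := by
    nlinarith [mul_le_mul_of_nonneg_left hd hsk, one_le_pow₀ (n := 2) hd]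
  exact le_of_mul_le_mul_left this (by positivity)

theorem norm_one_div_add_one_div_le {θ C : ℝ} (hθ0 : 0 ≤ θ) (hθ : θ ≤ π / 4) {a c w : ℂ}
    (ha : a ∈ sector θ) (hc : c ∈ sector θ) (hc0 : c ≠ 0) (hw : w ∈ sector θ) (hwC : ‖w‖ ≤ C)
    (hca : ‖c‖ ≤ C ^ 2 * Real.cos (2 * θ) * ‖a‖) :
    ‖1 / (a + 1 / (c + w))‖ ≤ C := by
  have hπ := pi_pos
  have hcos : 0 ≤ Real.cos (2 * θ) := Real.cos_nonneg_of_mem_Icc ⟨by linarith, by linarith⟩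
  have hC : 0 ≤ C := (norm_nonneg w).trans hwC
  set u := 1 / (c + w)
  have hu : u ∈ sector θ := by
    simpa only [u, one_div] using
      inv_mem_sector (by linarith) (add_mem_sector hθ0 (by linarith) hc hw)
  have hcw : 0 < ‖c + w‖ := by
    have h := norm_sq_add_le_norm_add_sq_of_mem_sector (by linarith) hc hw
    have : ‖c‖ ≤ ‖c + w‖ := (pow_le_pow_iff_left₀ (norm_nonneg _) (norm_nonneg _) two_ne_zero).mp
      (by nlinarith [mul_nonneg (mul_nonneg (norm_nonneg c) (norm_nonneg w)) hcos])
    exact (norm_pos_iff.mpr hc0).trans_le this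
  have hu_lower : 1 ≤ ‖u‖ * (‖c‖ + C) := by
    rw [norm_div, norm_one, one_div_mul_eq_div, one_le_div hcw]
    exact (norm_add_le c w).trans (by linarith)
  have h := (one_le_sq_mul_sq_add_sq_add_two_mul_mul hC hcos (norm_nonneg a) (norm_nonneg u)
    hu_lower hca).trans
    (mul_le_mul_of_nonneg_left (norm_sq_add_le_norm_add_sq_of_mem_sector (by linarith) ha hu)
      (sq_nonneg C))
  have h1 : 1 ≤ C * ‖a + u‖ := by
    rwa [← one_le_sq_iff₀ (by positivity), mul_pow]
  have h2 : 0 < ‖a + u‖ := pos_of_mul_pos_right (one_pos.trans_le h1) hC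
  rwa [norm_div, norm_one, div_le_iff₀ h2]

theorem even_convergents_in_disk_origin_general (θ : ℝ) (hθ0 : 0 ≤ θ) (hθ : θ < π / 4)
    (b : ℕ → ℂ)
    (hb : ∀ n, 1 ≤ n → b n ≠ 0 ∧ |(b n).arg| ≤ θ)
    (M : ℝ)
    (hM : ∀ n, 1 ≤ n → ‖b (2 * n) / b (2 * n - 1)‖ ≤ M)
    (C : ℝ)
    (hC2 : M / Real.cos (2 * θ) ≤ C ^ 2) :
    ∀ n : ℕ, ∀ w : ℂ, (w = 0 ∨ |w.arg| ≤ θ) → ‖w‖ ≤ C →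
      (contFrac (2 * n) b w (2 * n) = 0 ∨ |(contFrac (2 * n) b w (2 * n)).arg| ≤ θ) ∧
        ‖contFrac (2 * n) b w (2 * n)‖ ≤ C := by
  have hcos : 0 < Real.cos (2 * θ) := Real.cos_pos_of_mem_Ioo ⟨by linarith [pi_pos], by linarith⟩
  have hMC : M ≤ C ^ 2 * Real.cos (2 * θ) := (div_le_iff₀ hcos).mp hC2
  have hsector : ∀ n, 1 ≤ n → b n ∈ sector θ := fun n hn => Or.inr (hb n hn).2
  have hratio : ∀ n, ‖b (2 * n + 2)‖ ≤ C ^ 2 * Real.cos (2 * θ) * ‖b (2 * n + 1)‖ := by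
    intro n
    have h := hM (n + 1) (by omega)
    rw [show 2 * (n + 1) - 1 = 2 * n + 1 by omega, norm_div,
      div_le_iff₀ (norm_pos_iff.mpr (hb _ (by omega)).1)] at h
    exact h.trans (mul_le_mul_of_nonneg_right hMC (norm_nonneg _))
  intro n
  induction n with
  | zero => exact fun w hw hwC => ⟨hw, hwC⟩
  | succ n ih =>
    intro w hw hwC
    rw [Nat.mul_succ, contFrac_add_two]
    exact ih _ (one_div_add_one_div_mem_sector hθ0 (by linarith) (hsector _ (by omega))
        (hsector _ (by omega)) hw)
      (norm_one_div_add_one_div_le hθ0 hθ.le (hsector _ (by omega)) (hsector _ (by omega))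
        (hb _ (by omega)).1 hw hwC (hratio n))

theorem even_convergents_in_disk_origin (θ : ℝ) (hθ0 : 0 ≤ θ) (hθ : θ < π / 4)
    (b : ℕ → ℂ)
    (hb : ∀ n, 1 ≤ n → b n ≠ 0 ∧ |(b n).arg| ≤ θ)
    (M : ℝ)
    (hM : ∀ n, 1 ≤ n → ‖b (2 * n) / b (2 * n - 1)‖ ≤ M)
    (C : ℝ) (hC : 0 < C)
    (hC2 : M / Real.cos (2 * θ) ≤ C ^ 2) :
    ∀ n : ℕ, ∀ w : ℂ, (w = 0 ∨ |w.arg| ≤ θ) → ‖w‖ ≤ C →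
      (contFrac (2 * n) b w (2 * n) = 0 ∨ |(contFrac (2 * n) b w (2 * n)).arg| ≤ θ) ∧
        ‖contFrac (2 * n) b w (2 * n)‖ ≤ C :=
  even_convergents_in_disk_origin_general θ hθ0 hθ b hb M hM C hC2
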